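/- For every positive integer F, C(F) is the unique irreducible numerical semigroup with Frobenius number F all of whose minimal generators are greater than F/2. -/

import Mathlib

/-- A numerical semigroup: subset of ℕ closed under addition, containing 0, cofinite. -/
def IsNumericalSemigroup (S : Set ℕ) : Prop :=
  0 ∈ S ∧ (∀ a b, a ∈ S → b ∈ S → a + b ∈ S) ∧ Sᶜ.Finite

/-- The set of special gaps E(S). -/
def specialGaps (S : Set ℕ) : Set ℕ :=
  {x | x ∉ S ∧ 2 * x ∈ S ∧ ∀ s ∈ S, s ≠ 0 → x + s ∈ S}

/-- `F` is the Frobenius number of `S`: the greatest natural number not in `S`. -/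
def IsFrobenius (S : Set ℕ) (F : ℕ) : Prop :=
  F ∉ S ∧ ∀ m : ℕ, m ∉ S → m ≤ F

/-- Irreducible numerical semigroup. -/
def IsIrreducibleNS (S : Set ℕ) : Prop :=
  IsNumericalSemigroup S ∧ ∀ S₁ S₂ : Set ℕ, IsNumericalSemigroup S₁ →
    IsNumericalSemigroup S₂ → S = S₁ ∩ S₂ → S = S₁ ∨ S = S₂

/-- Atomic numerical semigroup. -/
def IsAtomicNS (S : Set ℕ) : Prop :=
  IsNumericalSemigroup S ∧ ∀ (F : ℕ) (S₁ S₂ : Set ℕ), IsFrobenius S F →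
    IsNumericalSemigroup S₁ → IsNumericalSemigroup S₂ →
    IsFrobenius S₁ F → IsFrobenius S₂ F → S = S₁ ∩ S₂ → S = S₁ ∨ S = S₂

/-- Pseudo-Frobenius numbers of `S`, as integers. -/
def pseudoFrob (S : Set ℕ) : Set ℤ :=
  {x | x ∉ (fun n : ℕ => (n : ℤ)) '' S ∧
    ∀ s ∈ S, s ≠ 0 → x + (s : ℤ) ∈ (fun n : ℕ => (n : ℤ)) '' S}

/-- The semigroup C(F): 0 together with all naturals greater than F/2, except F. -/
def NSC (F : ℕ) : Set ℕ := insert 0 ({n : ℕ | F / 2 < n} \ {F})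

/-- `x` is a minimal generator of `S`. -/
def IsMinGen (S : Set ℕ) (x : ℕ) : Prop :=
  x ∈ S ∧ x ≠ 0 ∧ ∀ a b, a ∈ S → b ∈ S → a ≠ 0 → b ≠ 0 → a + b ≠ x

/-!
Every nonzero element of a numerical semigroup lies above some minimal generator, so if all minimal
generators exceed `F / 2` then `S ⊆ C(F)`. Conversely `C(F)` is maximal among the numerical semigroups
not containing `F`, which makes it irreducible. For an irreducible `S` with Frobenius number `F`, the
only special gap is `F`: adjoining a special gap `x ≠ F`, or adjoining `F`, gives two numerical
semigroups whose intersection is `S`. If `S ⊊ C(F)`, the largest element of `C(F) \ S` would be such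
a special gap.
-/

namespace IsNumericalSemigroup

variable {S : Set ℕ}

theorem insert_of_mem_specialGaps (hS : IsNumericalSemigroup S) {x : ℕ}
    (hx : x ∈ specialGaps S) : IsNumericalSemigroup (insert x S) := by
  obtain ⟨h0, hadd, hfin⟩ := hS
  obtain ⟨-, h2x, hxs⟩ := hx
  have hstep : ∀ s ∈ S, x + s ∈ insert x S := fun s hs => by
    by_cases hs0 : s = 0
    · simp [hs0]
    · exact Or.inr (hxs s hs hs0)
  refine ⟨Or.inr h0, ?_, hfin.subset (Set.compl_subset_compl.mpr (Set.subset_insert x S))⟩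
  rintro a b (rfl | ha) (rfl | hb)
  · exact Or.inr (by rwa [← two_mul])
  · exact hstep b hb
  · exact add_comm b a ▸ hstep a ha
  · exact Or.inr (hadd a b ha hb)

theorem mem_specialGaps_of_isFrobenius (hS : IsNumericalSemigroup S) {F : ℕ}
    (hF : IsFrobenius S F) : F ∈ specialGaps S := by
  have hF0 : F ≠ 0 := fun h => hF.1 (h ▸ hS.1)
  refine ⟨hF.1, ?_, fun s _ hs0 => ?_⟩
  all_goals
    by_contra h
    have := hF.2 _ h
    omega

/-- The largest element of `T \ S` is a special gap of `S`. -/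
theorem exists_mem_specialGaps_of_ssubset (hS : IsNumericalSemigroup S) {T : Set ℕ}
    (hT : ∀ a b, a ∈ T → b ∈ T → a + b ∈ T) (hST : S ⊂ T) : ∃ x ∈ T, x ∈ specialGaps S := by
  set D := T \ S
  have hD : D.Nonempty := Set.sdiff_nonempty.mpr hST.not_subset
  have hDbdd : BddAbove D := (hS.2.2.subset fun y hy => hy.2).bddAbove
  obtain ⟨hxT, hxS⟩ : sSup D ∈ D := Nat.sSup_mem hD hDbdd
  have hx0 : sSup D ≠ 0 := fun h => hxS (h ▸ hS.1)
  have habove : ∀ y ∈ T, sSup D < y → y ∈ S := fun y hy hlt => by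
    by_contra hyS
    exact absurd (le_csSup hDbdd ⟨hy, hyS⟩) (not_le.mpr hlt)
  refine ⟨sSup D, hxT, hxS, ?_, fun s hs hs0 => ?_⟩
  · exact habove _ (two_mul (sSup D) ▸ hT _ _ hxT hxT) (by omega)
  · exact habove _ (hT _ _ hxT (hST.subset hs)) (by omega)

end IsNumericalSemigroup

theorem IsIrreducibleNS.eq_of_mem_specialGaps {S : Set ℕ} {F x : ℕ} (hS : IsIrreducibleNS S)
    (hF : IsFrobenius S F) (hx : x ∈ specialGaps S) : x = F := by
  by_contra hxF
  have hinter : S = insert x S ∩ insert F S := by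
    ext y
    simp only [Set.mem_inter_iff, Set.mem_insert_iff]
    constructor
    · exact fun hy => ⟨Or.inr hy, Or.inr hy⟩
    · rintro ⟨rfl | hy, rfl | hy'⟩ <;> first | assumption | exact absurd rfl hxF
  rcases hS.2 _ _ (hS.1.insert_of_mem_specialGaps hx)
      (hS.1.insert_of_mem_specialGaps (hS.1.mem_specialGaps_of_isFrobenius hF)) hinter with h | h
  · exact hx.1 (h ▸ Set.mem_insert x S)
  · exact hF.1 (h ▸ Set.mem_insert F S)

theorem exists_isMinGen_le {S : Set ℕ} {s : ℕ} (hs : s ∈ S) (hs0 : s ≠ 0) :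
    ∃ m, IsMinGen S m ∧ m ≤ s := by
  classical
  have hex : ∃ t, t ∈ S ∧ t ≠ 0 := ⟨s, hs, hs0⟩
  obtain ⟨hmS, hm0⟩ := Nat.find_spec hex
  refine ⟨Nat.find hex, ⟨hmS, hm0, fun a b ha _ ha0 hb0 hab => ?_⟩, Nat.find_min' hex ⟨hs, hs0⟩⟩
  exact Nat.find_min hex (show a < Nat.find hex by omega) ⟨ha, ha0⟩

section NSC

variable {F : ℕ}

theorem mem_NSC {n : ℕ} : n ∈ NSC F ↔ n = 0 ∨ F / 2 < n ∧ n ≠ F := by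
  simp [NSC]

theorem isNumericalSemigroup_NSC : IsNumericalSemigroup (NSC F) := by
  refine ⟨mem_NSC.mpr (Or.inl rfl), fun a b ha hb => ?_, (Set.finite_Iic F).subset fun m hm => ?_⟩
  · rw [mem_NSC] at ha hb ⊢
    omega
  · rw [Set.mem_compl_iff, mem_NSC] at hm
    rw [Set.mem_Iic]
    omega

theorem isFrobenius_NSC (hF : 0 < F) : IsFrobenius (NSC F) F :=
  ⟨by rw [mem_NSC]; omega, fun m hm => by rw [mem_NSC] at hm; omega⟩

/-- A nonzero `t ≤ F / 2` satisfies `t + t = F` or `F - t ∈ C(F)`, so adjoining it to `C(F)`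
produces `F`. -/
theorem eq_NSC_of_NSC_subset {T : Set ℕ} (hT : ∀ a b, a ∈ T → b ∈ T → a + b ∈ T)
    (hsub : NSC F ⊆ T) (hFT : F ∉ T) : T = NSC F := by
  refine (Set.Subset.antisymm hsub fun t ht => ?_).symm
  by_contra htC
  rw [mem_NSC] at htC
  have htF : t ≠ F := fun h => hFT (h ▸ ht)
  by_cases h2t : 2 * t = F
  · exact hFT (show t + t = F by omega ▸ hT t t ht ht)
  · have hFt : F - t ∈ NSC F := mem_NSC.mpr (Or.inr ⟨by omega, by omega⟩)
    exact hFT (show t + (F - t) = F by omega ▸ hT _ _ ht (hsub hFt))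

theorem isIrreducibleNS_NSC (hF : 0 < F) : IsIrreducibleNS (NSC F) := by
  refine ⟨isNumericalSemigroup_NSC, fun S₁ S₂ h₁ h₂ heq => ?_⟩
  by_cases hF₁ : F ∈ S₁
  · have hF₂ : F ∉ S₂ := fun hF₂ => (isFrobenius_NSC hF).1 (heq ▸ ⟨hF₁, hF₂⟩)
    exact Or.inr (eq_NSC_of_NSC_subset h₂.2.1 (heq ▸ Set.inter_subset_right) hF₂).symm
  · exact Or.inl (eq_NSC_of_NSC_subset h₁.2.1 (heq ▸ Set.inter_subset_left) hF₁).symm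

theorem lt_two_mul_of_mem_NSC {x : ℕ} (hx : x ∈ NSC F) (hx0 : x ≠ 0) : F < 2 * x := by
  rw [mem_NSC] at hx
  omega

theorem subset_NSC_of_isMinGen {S : Set ℕ} (hFS : F ∉ S) (hgen : ∀ x, IsMinGen S x → F < 2 * x) :
    S ⊆ NSC F := fun s hs => by
  rw [mem_NSC]
  by_cases hs0 : s = 0
  · exact Or.inl hs0
  · obtain ⟨m, hm, hms⟩ := exists_isMinGen_le hs hs0
    have := hgen m hm
    exact Or.inr ⟨by omega, fun h => hFS (h ▸ hs)⟩

end NSC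

theorem stmt17 (F : ℕ) (hF : 0 < F) :
    (IsIrreducibleNS (NSC F) ∧ IsFrobenius (NSC F) F ∧
      (∀ x, IsMinGen (NSC F) x → F < 2 * x)) ∧
    (∀ S : Set ℕ, IsIrreducibleNS S → IsFrobenius S F →
      (∀ x, IsMinGen S x → F < 2 * x) → S = NSC F) := by
  refine ⟨⟨isIrreducibleNS_NSC hF, isFrobenius_NSC hF,
    fun x hx => lt_two_mul_of_mem_NSC hx.1 hx.2.1⟩, fun S hS hSF hgen => ?_⟩
  have hsub : S ⊆ NSC F := subset_NSC_of_isMinGen hSF.1 hgen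
  by_contra hne
  obtain ⟨x, hxC, hx⟩ := hS.1.exists_mem_specialGaps_of_ssubset
    isNumericalSemigroup_NSC.2.1 (hsub.ssubset_of_ne hne)
  exact (isFrobenius_NSC hF).1 (hS.eq_of_mem_specialGaps hSF hx ▸ hxC)
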